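/- Let W > 0 and V > 0 and let c : Fin 4 → ℝ² be the image corner quadrilateral c₀ = (0,0), c₁ = (W,0), c₂ = (W,V), c₃ = (0,V). Let M ∈ ℝ^{3×3} with det(M) ≠ 0 and w_M(c_i) > 0 for all i. Then the transformed corners f_M ∘ c form a quadrilateral in general position whose Q-value equals 4, i.e. the transformed image corners form a convex quadrilateral. (Consequently, any homography whose transformed corner quadrilateral has Q-value ≠ 4 cannot satisfy these plausibility conditions.) -/
import Mathlib


/-- The cross value of three points in the plane: the z-coordinate of the
cross product `(b - a) × (c - b)`. -/
noncomputable def cross (a b c : ℝ × ℝ) : ℝ :=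
  (b.1 - a.1) * (c.2 - b.2) - (b.2 - a.2) * (c.1 - b.1)

/-- The lift of a planar point `(x, y)` to `(x, y, 1) ∈ ℝ³`. -/
noncomputable def liftPt (p : ℝ × ℝ) : Fin 3 → ℝ := ![p.1, p.2, 1]

/-- The homography denominator: the third coordinate of `H ℓ(p)`. -/
noncomputable def wH (H : Matrix (Fin 3) (Fin 3) ℝ) (p : ℝ × ℝ) : ℝ :=
  H.mulVec (liftPt p) 2

/-- The planar homography induced by the matrix `H`. -/
noncomputable def fH (H : Matrix (Fin 3) (Fin 3) ℝ) (p : ℝ × ℝ) : ℝ × ℝ :=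
  (H.mulVec (liftPt p) 0 / wH H p, H.mulVec (liftPt p) 1 / wH H p)


/-- A quadrilateral `p : Fin 4 → ℝ²` is in general position if no three of its
four points are collinear. -/
def GeneralPosition (p : Fin 4 → ℝ × ℝ) : Prop :=
  ∀ i j k : Fin 4, i ≠ j → i ≠ k → j ≠ k → cross (p i) (p j) (p k) ≠ 0

/-- The Q-value of a quadrilateral: `|∑ i, sgn (cross (p (i-1)) (p i) (p (i+1)))|`. -/
noncomputable def Qvalue (p : Fin 4 → ℝ × ℝ) : ℝ :=
  |∑ i : Fin 4, Real.sign (cross (p (i - 1)) (p i) (p (i + 1)))|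

/-- Auxiliary algebraic identity for the cross value of projected points. -/
lemma alg (A0 A1 Aw B0 B1 Bw C0 C1 Cw : ℝ) (ha : Aw ≠ 0) (hb : Bw ≠ 0) (hc : Cw ≠ 0) :
    (B0/Bw - A0/Aw) * (C1/Cw - B1/Bw) - (B1/Bw - A1/Aw) * (C0/Cw - B0/Bw)
      = (A0*(B1*Cw - Bw*C1) - A1*(B0*Cw - Bw*C0) + Aw*(B0*C1 - B1*C0)) / (Aw*Bw*Cw) := by
  field_simp
  ring

/-- The key transformation law: the cross value of homography images equals
`det M` times the original cross value, divided by the product of denominators. -/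
lemma cross_fH (M : Matrix (Fin 3) (Fin 3) ℝ) (a b c : ℝ × ℝ)
    (ha : wH M a ≠ 0) (hb : wH M b ≠ 0) (hc : wH M c ≠ 0) :
    cross (fH M a) (fH M b) (fH M c)
      = M.det * cross a b c / (wH M a * wH M b * wH M c) := by
  have h := alg (M.mulVec (liftPt a) 0) (M.mulVec (liftPt a) 1) (wH M a)
    (M.mulVec (liftPt b) 0) (M.mulVec (liftPt b) 1) (wH M b)
    (M.mulVec (liftPt c) 0) (M.mulVec (liftPt c) 1) (wH M c) ha hb hc
  show ((fH M b).1 - (fH M a).1) * ((fH M c).2 - (fH M b).2)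
      - ((fH M b).2 - (fH M a).2) * ((fH M c).1 - (fH M b).1) = _
  simp only [fH]
  rw [h]
  congr 1
  simp only [wH, Matrix.mulVec, dotProduct, liftPt, Fin.sum_univ_three,
    Matrix.det_fin_three, Matrix.cons_val_zero, Matrix.cons_val_one, Matrix.head_cons,
    Matrix.cons_val_two, Matrix.tail_cons, cross]
  ring

theorem transformed_corners_convex (W V : ℝ) (hW : 0 < W) (hV : 0 < V)
    (M : Matrix (Fin 3) (Fin 3) ℝ) (hdet : M.det ≠ 0)
    (c : Fin 4 → ℝ × ℝ)
    (hc : c = ![((0 : ℝ), (0 : ℝ)), (W, 0), (W, V), (0, V)])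
    (hw : ∀ i, 0 < wH M (c i)) :
    GeneralPosition (fun i => fH M (c i)) ∧
      Qvalue (fun i => fH M (c i)) = 4 := by
  have hwne : ∀ i, wH M (c i) ≠ 0 := fun i => (hw i).ne'
  have hWV : 0 < W * V := mul_pos hW hV
  subst hc
  have hgp0 : ∀ i j k : Fin 4, i ≠ j → i ≠ k → j ≠ k →
      cross (![((0 : ℝ), (0 : ℝ)), (W, 0), (W, V), (0, V)] i)
        (![((0 : ℝ), (0 : ℝ)), (W, 0), (W, V), (0, V)] j)
        (![((0 : ℝ), (0 : ℝ)), (W, 0), (W, V), (0, V)] k) ≠ 0 := by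
    intro i j k hij hik hjk
    fin_cases i <;> fin_cases j <;> fin_cases k <;>
      simp_all [cross] <;>
      first
      | exact ⟨hW.ne', hV.ne'⟩
      | exact ⟨hV.ne', hW.ne'⟩
  constructor
  · intro i j k hij hik hjk
    simp only
    rw [cross_fH M _ _ _ (hwne i) (hwne j) (hwne k)]
    exact div_ne_zero (mul_ne_zero hdet (hgp0 i j k hij hik hjk))
      (mul_pos (mul_pos (hw i) (hw j)) (hw k)).ne'
  · have hterm : ∀ i : Fin 4,
        cross (![((0 : ℝ), (0 : ℝ)), (W, 0), (W, V), (0, V)] (i - 1))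
          (![((0 : ℝ), (0 : ℝ)), (W, 0), (W, V), (0, V)] i)
          (![((0 : ℝ), (0 : ℝ)), (W, 0), (W, V), (0, V)] (i + 1)) = W * V := by
      intro i
      fin_cases i <;> simp [cross, show (-1 : Fin 4) = 3 from rfl] <;> ring
    have hsgn : ∀ i : Fin 4,
        Real.sign (cross (fH M (![((0 : ℝ), (0 : ℝ)), (W, 0), (W, V), (0, V)] (i - 1)))
          (fH M (![((0 : ℝ), (0 : ℝ)), (W, 0), (W, V), (0, V)] i))
          (fH M (![((0 : ℝ), (0 : ℝ)), (W, 0), (W, V), (0, V)] (i + 1))))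
          = Real.sign M.det := by
      intro i
      rw [cross_fH M _ _ _ (hwne (i - 1)) (hwne i) (hwne (i + 1)), hterm i]
      rcases hdet.lt_or_gt with h | h
      · rw [Real.sign_of_neg h, Real.sign_of_neg]
        exact div_neg_of_neg_of_pos (mul_neg_of_neg_of_pos h hWV)
          (mul_pos (mul_pos (hw _) (hw _)) (hw _))
      · rw [Real.sign_of_pos h, Real.sign_of_pos]
        exact div_pos (mul_pos h hWV) (mul_pos (mul_pos (hw _) (hw _)) (hw _))
    have : Qvalue (fun i => fH M (![((0 : ℝ), (0 : ℝ)), (W, 0), (W, V), (0, V)] i))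
        = |∑ _i : Fin 4, Real.sign M.det| := by
      unfold Qvalue
      congr 1
      exact Finset.sum_congr rfl fun i _ => hsgn i
    rw [this, Finset.sum_const, Finset.card_univ, Fintype.card_fin]
    rcases hdet.lt_or_gt with h | h
    · rw [Real.sign_of_neg h]; norm_num
    · rw [Real.sign_of_pos h]; norm_num
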